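/- arXiv:2203.03358 — 5 statements merged into one kernel-verified Lean document; each statement's English description precedes it below -/
import Mathlib

section
/- Let G be a graph, r ∈ ℕ, S ⊆ V(G), L_S a linear ordering of S, and L a full right extension of L_S. Then wcol_r(G, L) ≥ wcol_r(G, L_S), where wcol_r(G, L_S) is defined as the maximum over all v ∈ V(G) of the number of vertices u such that either u = v, or u ∈ S and there is a path of length at most r from v to u all of whose vertices in S come at or after u in L_S. -/
open SimpleGraph

variable {V : Type*} [DecidableEq V]

/-- `u ∈ Wfull G r L v` iff `u` is weakly `r`-reachable from `v` w.r.t. the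
full vertex ordering given by the list `L`. -/
def Wfull (G : SimpleGraph V) (r : ℕ) (L : List V) (v : V) : Set V :=
  {u | ∃ p : G.Walk v u, p.IsPath ∧ p.length ≤ r ∧ ∀ w ∈ p.support, L.idxOf u ≤ L.idxOf w}

/-- Weak `r`-reachability w.r.t. a subordering `L` (a list of a subset of the vertices):
`u = v`, or `u` is ordered and there is a path of length at most `r` between `u` and `v`
all of whose ordered vertices come at or after `u`. -/
def Wsub (G : SimpleGraph V) (r : ℕ) (L : List V) (v : V) : Set V :=
  {u | u = v ∨ (u ∈ L ∧ ∃ p : G.Walk v u, p.IsPath ∧ p.length ≤ r ∧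
      ∀ w ∈ p.support, w ∈ L → L.idxOf u ≤ L.idxOf w)}

/-- The weak `r`-coloring number of the full ordering `L`. -/
noncomputable def wcolFull (G : SimpleGraph V) [Fintype V] (r : ℕ) (L : List V) : ℕ :=
  Finset.univ.sup fun v => (Wfull G r L v).ncard

/-- The weak `r`-coloring number of a subordering `L`. -/
noncomputable def wcolSub (G : SimpleGraph V) [Fintype V] (r : ℕ) (L : List V) : ℕ :=
  Finset.univ.sup fun v => (Wsub G r L v).ncard

/-- The weak `r`-coloring number of `G`: minimum over all full orderings. -/
noncomputable def wcolG (G : SimpleGraph V) [Fintype V] (r : ℕ) : ℕ :=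
  sInf {k | ∃ L : List V, L.Nodup ∧ (∀ x, x ∈ L) ∧ wcolFull G r L = k}

/- The key point: in a right extension `LS ++ t`, every vertex outside `LS` comes after
every vertex of `LS`, so only the comparisons inside `LS` matter. -/
theorem List.idxOf_append_le_idxOf_append {LS : List V} {u w : V} (t : List V) (hu : u ∈ LS)
    (hle : w ∈ LS → LS.idxOf u ≤ LS.idxOf w) :
    (LS ++ t).idxOf u ≤ (LS ++ t).idxOf w := by
  rw [List.idxOf_append_of_mem hu]
  by_cases hw : w ∈ LS
  · rw [List.idxOf_append_of_mem hw]
    exact hle hw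
  · rw [List.idxOf_append_of_notMem hw]
    have hu_lt : LS.idxOf u < LS.length := List.idxOf_lt_length_iff.mpr hu
    omega

theorem Wsub_subset_Wfull_append (G : SimpleGraph V) (r : ℕ) (LS t : List V) (v : V) :
    Wsub G r LS v ⊆ Wfull G r (LS ++ t) v := by
  rintro u (rfl | ⟨hu, p, hp, hlen, hmin⟩)
  · refine ⟨Walk.nil, Walk.IsPath.nil, Nat.zero_le r, fun w hw => ?_⟩
    rw [Walk.support_nil, List.mem_singleton] at hw
    rw [hw]
  · exact ⟨p, hp, hlen, fun w hw =>
      List.idxOf_append_le_idxOf_append t hu (hmin w hw)⟩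

theorem stmt2_general [Fintype V] (G : SimpleGraph V) (r : ℕ) (LS L : List V)
    (hext : ∃ t : List V, L = LS ++ t) :
    wcolSub G r LS ≤ wcolFull G r L := by
  obtain ⟨t, rfl⟩ := hext
  exact Finset.sup_mono_fun fun v _ =>
    Set.ncard_le_ncard (Wsub_subset_Wfull_append G r LS t v) (Set.toFinite _)

theorem stmt2 [Fintype V] (G : SimpleGraph V) (r : ℕ) (LS L : List V)
    (hLS : LS.Nodup) (hL : L.Nodup) (hfull : ∀ x, x ∈ L)
    (hext : ∃ t : List V, L = LS ++ t) :
    wcolSub G r LS ≤ wcolFull G r L :=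
  stmt2_general G r LS L hext
end

section
/- Let G be a graph, r ∈ ℕ, L_S = (s_1, …, s_n) a subordering of S ⊆ V(G), and v ∈ V(G)\S. Let L_{S∪{v}} be any linear ordering of S ∪ {v} whose restriction to S equals L_S. Then Wreach_r(G, L_{S∪{v}}, v) \ {v} = { s ∈ bp(G, L_S, v) : s ⪯_{L_{S∪{v}}} v }, where bp(G, L_S, v) is the set of breakpoints of v, i.e., vertices s ∈ S such that Wreach_r(G, placebefore(L_S, s, v), v) ≠ Wreach_r(G, placeafter(L_S, s, v), v). -/
open SimpleGraph

variable {V : Type*} [DecidableEq V]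

/-- Insert `v` immediately before `s` in the list `L`. -/
def placeBefore (L : List V) (s v : V) : List V :=
  L.takeWhile (· != s) ++ v :: L.dropWhile (· != s)

/-- Insert `v` immediately after `s` in the list `L`. -/
def placeAfter (L : List V) (s v : V) : List V :=
  L.takeWhile (· != s) ++ s :: v :: (L.dropWhile (· != s)).tail

/-- The set of breakpoints of `v` w.r.t. the subordering `L`. -/
def bp (G : SimpleGraph V) (r : ℕ) (L : List V) (v : V) : Set V :=
  {s | s ∈ L ∧ Wsub G r (placeBefore L s v) v ≠ Wsub G r (placeAfter L s v) v}

/-!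
Write `M = A ++ v :: B`, so that `L_S = A ++ B`. Inserting `v` does not change the relative order
of the other vertices, and the vertices before `v` are exactly those of `A`; hence
`Wreach_r(G, M, v) \ {v}` consists of the vertices of `A` that are weakly reachable from `v` with
respect to `L_S` itself. Applied to `placebefore(L_S, s, v)` and `placeafter(L_S, s, v)`, which
differ only in whether `s` precedes `v`, this shows that `s` is a breakpoint exactly when it is
weakly reachable from `v` with respect to `L_S`.
-/

section Insertion

variable {A B : List V} {v : V}

theorem idxOf_append_lt_length_iff {x : V} : (A ++ B).idxOf x < A.length ↔ x ∈ A := by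
  by_cases hx : x ∈ A
  · simpa [List.idxOf_append_of_mem hx, hx] using List.idxOf_lt_length_iff.2 hx
  · simp [List.idxOf_append_of_notMem hx, hx]

theorem idxOf_append_cons_of_ne {x : V} (hx : x ≠ v) :
    (A ++ v :: B).idxOf x = if x ∈ A then (A ++ B).idxOf x else (A ++ B).idxOf x + 1 := by
  split_ifs with hxA
  · simp only [List.idxOf_append_of_mem hxA]
  · simp only [List.idxOf_append_of_notMem hxA, List.idxOf_cons_ne _ hx.symm]
    omega

theorem idxOf_append_cons_le_iff {a b : V} (ha : a ≠ v) (hb : b ≠ v) :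
    (A ++ v :: B).idxOf a ≤ (A ++ v :: B).idxOf b ↔ (A ++ B).idxOf a ≤ (A ++ B).idxOf b := by
  rw [idxOf_append_cons_of_ne ha, idxOf_append_cons_of_ne hb]
  split_ifs with haA hbA hbA <;> rw [← idxOf_append_lt_length_iff (B := B)] at haA hbA <;> omega

theorem idxOf_append_cons_le_idxOf_self_iff {u : V} (hvA : v ∉ A) (hu : u ≠ v) :
    (A ++ v :: B).idxOf u ≤ (A ++ v :: B).idxOf v ↔ u ∈ A := by
  have hv : (A ++ v :: B).idxOf v = A.length := by simp [List.idxOf_append_of_notMem hvA]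
  rw [idxOf_append_cons_of_ne hu, hv]
  split_ifs with huA <;> simp only [huA, iff_true, iff_false] <;>
    rw [← idxOf_append_lt_length_iff (B := B)] at huA <;> omega

end Insertion

section WeakReachability

variable (G : SimpleGraph V) (r : ℕ)

theorem self_mem_Wsub (L : List V) (v : V) : v ∈ Wsub G r L v :=
  Or.inl rfl

theorem Wsub_eq_Wsub_iff_sdiff {L L' : List V} {v : V} :
    Wsub G r L v = Wsub G r L' v ↔ Wsub G r L v \ {v} = Wsub G r L' v \ {v} := by
  refine ⟨fun h => h ▸ rfl, fun h => ?_⟩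
  rw [← Set.insert_eq_of_mem (self_mem_Wsub G r L v), ← Set.insert_sdiff_singleton, h,
    Set.insert_sdiff_singleton, Set.insert_eq_of_mem (self_mem_Wsub G r L' v)]

theorem Wsub_append_cons_sdiff {A B : List V} {v : V} (hvA : v ∉ A) (hvB : v ∉ B) :
    Wsub G r (A ++ v :: B) v \ {v} = {u | u ∈ A} ∩ Wsub G r (A ++ B) v := by
  ext u
  constructor
  · rintro ⟨rfl | ⟨-, p, hp, hlen, hord⟩, huv⟩
    · exact absurd rfl huv
    have huA : u ∈ A :=
      (idxOf_append_cons_le_idxOf_self_iff hvA huv).1 (hord v p.start_mem_support (by simp))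
    refine ⟨huA, Or.inr ⟨by simp [huA], p, hp, hlen, fun w hw hwL => ?_⟩⟩
    have hwv : w ≠ v := by rintro rfl; simp [hvA, hvB] at hwL
    exact (idxOf_append_cons_le_iff huv hwv).1 (hord w hw (by simp at hwL ⊢; tauto))
  · rintro ⟨(huA : u ∈ A), rfl | ⟨-, p, hp, hlen, hord⟩⟩
    · exact absurd huA hvA
    have huv : u ≠ v := ne_of_mem_of_not_mem huA hvA
    refine ⟨Or.inr ⟨by simp [huA], p, hp, hlen, fun w hw hwL => ?_⟩, huv⟩
    by_cases hwv : w = v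
    · subst hwv
      exact (idxOf_append_cons_le_idxOf_self_iff hvA huv).2 huA
    · exact (idxOf_append_cons_le_iff huv hwv).2 (hord w hw (by simpa [hwv] using hwL))

end WeakReachability

section Breakpoints

variable {T D : List V} {s : V}

theorem takeWhile_ne_append_cons (hsT : s ∉ T) : (T ++ s :: D).takeWhile (· != s) = T := by
  rw [List.takeWhile_append_of_pos (by simpa using fun a ha (h : a = s) => hsT (h ▸ ha))]
  simp

theorem dropWhile_ne_append_cons (hsT : s ∉ T) : (T ++ s :: D).dropWhile (· != s) = s :: D := by
  rw [List.dropWhile_append_of_pos (by simpa using fun a ha (h : a = s) => hsT (h ▸ ha))]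
  simp

theorem placeBefore_append_cons (hsT : s ∉ T) (v : V) :
    placeBefore (T ++ s :: D) s v = T ++ v :: s :: D := by
  rw [placeBefore, takeWhile_ne_append_cons hsT, dropWhile_ne_append_cons hsT]

theorem placeAfter_append_cons (hsT : s ∉ T) (v : V) :
    placeAfter (T ++ s :: D) s v = (T ++ [s]) ++ v :: D := by
  rw [placeAfter, takeWhile_ne_append_cons hsT, dropWhile_ne_append_cons hsT]
  simp

theorem mem_bp_iff (G : SimpleGraph V) (r : ℕ) {L : List V} {v : V} (hv : v ∉ L) :
    s ∈ bp G r L v ↔ s ∈ L ∧ s ∈ Wsub G r L v := by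
  refine and_congr_right fun hs => ?_
  obtain ⟨T, D, hsT, rfl, -⟩ := List.exists_erase_eq hs
  simp only [List.mem_append, List.mem_cons, not_or] at hv
  obtain ⟨hvT, hvs, hvD⟩ := hv
  have hTs : {u | u ∈ T ++ [s]} = insert s {u | u ∈ T} := by ext; simp [or_comm]
  rw [placeBefore_append_cons hsT, placeAfter_append_cons hsT, ne_eq, Wsub_eq_Wsub_iff_sdiff,
    Wsub_append_cons_sdiff G r hvT (by simp [hvs, hvD]),
    Wsub_append_cons_sdiff G r (by simp [hvT, hvs]) hvD, List.append_assoc, List.singleton_append,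
    hTs]
  by_cases hsW : s ∈ Wsub G r (T ++ s :: D) v
  · rw [Set.insert_inter_of_mem hsW, eq_comm, Set.insert_eq_self]
    simp [hsT, hsW]
  · rw [Set.insert_inter_of_notMem hsW]
    simp [hsW]

end Breakpoints

theorem stmt3_general (G : SimpleGraph V) (r : ℕ) (LS : List V)
    (v : V) (hv : v ∉ LS) (M : List V) (hvM : v ∈ M)
    (hres : M.erase v = LS) :
    Wsub G r M v \ {v} = {s | s ∈ bp G r LS v ∧ M.idxOf s ≤ M.idxOf v} := by
  obtain ⟨A, B, hvA, rfl, hMerase⟩ := List.exists_erase_eq hvM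
  obtain rfl : LS = A ++ B := hres ▸ hMerase
  have hvB : v ∉ B := fun h => hv (List.mem_append_right A h)
  ext s
  rw [Wsub_append_cons_sdiff G r hvA hvB]
  simp only [Set.mem_inter_iff, Set.mem_ofPred_eq, mem_bp_iff G r hv]
  constructor
  · rintro ⟨hsA, hsW⟩
    have hsv : s ≠ v := ne_of_mem_of_not_mem hsA hvA
    exact ⟨⟨List.mem_append_left B hsA, hsW⟩, (idxOf_append_cons_le_idxOf_self_iff hvA hsv).2 hsA⟩
  · rintro ⟨⟨hsL, hsW⟩, hle⟩
    have hsv : s ≠ v := ne_of_mem_of_not_mem hsL hv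
    exact ⟨(idxOf_append_cons_le_idxOf_self_iff hvA hsv).1 hle, hsW⟩

theorem stmt3 (G : SimpleGraph V) (r : ℕ) (LS : List V) (hLS : LS.Nodup)
    (v : V) (hv : v ∉ LS) (M : List V) (hM : M.Nodup) (hvM : v ∈ M)
    (hres : M.erase v = LS) :
    Wsub G r M v \ {v} = {s | s ∈ bp G r LS v ∧ M.idxOf s ≤ M.idxOf v} :=
  stmt3_general G r LS v hv M hvM hres
end

section
/- Let G be a graph, r ∈ ℕ, L_S a subordering of S ⊆ V(G), and v ∈ V(G)\S. Then a vertex s ∈ S is not a breakpoint of v (i.e., s ∉ bp(G, L_S, v)) if and only if for every vertex u ∈ V(G), Wreach_r(G, placebefore(L_S, s, v), u) = Wreach_r(G, placeafter(L_S, s, v), u). -/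
/-!
Moving `v` from just before `s` to just after `s` swaps two adjacent positions of the ordering,
so the only comparison that changes is the one between `v` and `s`. A path can notice this only
if it runs between `v` and `s` avoiding every vertex ordered before both. Such a short path
exists exactly when `s` is weakly reachable from `v` after the move but not before it, i.e.
exactly when `s` is a breakpoint of `v`.
-/

open SimpleGraph

variable {V : Type*} [DecidableEq V]

lemma placeBefore_append_cons_s4 {A B : List V} {s : V} (hs : s ∉ A) (v : V) :
    placeBefore (A ++ s :: B) s v = A ++ v :: s :: B := by
  have hA : ∀ a ∈ A, (a != s) = true := fun a ha => bne_iff_ne.2 (ne_of_mem_of_not_mem ha hs)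
  simp [placeBefore, List.takeWhile_append_of_pos hA, List.dropWhile_append_of_pos hA]

lemma placeAfter_append_cons_s4 {A B : List V} {s : V} (hs : s ∉ A) (v : V) :
    placeAfter (A ++ s :: B) s v = A ++ s :: v :: B := by
  have hA : ∀ a ∈ A, (a != s) = true := fun a ha => bne_iff_ne.2 (ne_of_mem_of_not_mem ha hs)
  simp [placeAfter, List.takeWhile_append_of_pos hA, List.dropWhile_append_of_pos hA]

section Swap

variable {A B : List V} {x y : V}

omit [DecidableEq V] in
lemma notMem_notMem_ne_of_nodup (hL : (A ++ x :: y :: B).Nodup) : x ∉ A ∧ y ∉ A ∧ x ≠ y := by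
  grind [List.nodup_append, List.nodup_cons]

lemma idxOf_append_cons_cons_cases (hx : x ∉ A) (hy : y ∉ A) (hxy : x ≠ y) (t : V) :
    (t = x ∧ (A ++ x :: y :: B).idxOf t = A.length ∧
        (A ++ y :: x :: B).idxOf t = A.length + 1) ∨
      (t = y ∧ (A ++ x :: y :: B).idxOf t = A.length + 1 ∧
        (A ++ y :: x :: B).idxOf t = A.length) ∨
      ((A ++ y :: x :: B).idxOf t = (A ++ x :: y :: B).idxOf t ∧
        ((A ++ x :: y :: B).idxOf t < A.length ∨ A.length + 2 ≤ (A ++ x :: y :: B).idxOf t)) := by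
  by_cases htx : t = x
  · subst htx
    simp [List.idxOf_append_of_notMem hx, List.idxOf_cons_ne _ (Ne.symm hxy)]
  by_cases hty : t = y
  · subst hty
    simp [List.idxOf_append_of_notMem hy, List.idxOf_cons_ne _ hxy]
  refine Or.inr (Or.inr ?_)
  by_cases hA : t ∈ A
  · rw [List.idxOf_append_of_mem hA, List.idxOf_append_of_mem hA]
    exact ⟨rfl, Or.inl (List.idxOf_lt_length_of_mem hA)⟩
  · rw [List.idxOf_append_of_notMem hA, List.idxOf_append_of_notMem hA,
      List.idxOf_cons_ne _ (Ne.symm htx), List.idxOf_cons_ne _ (Ne.symm hty),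
      List.idxOf_cons_ne _ (Ne.symm hty), List.idxOf_cons_ne _ (Ne.symm htx)]
    omega

lemma idxOf_le_idxOf_swap (hx : x ∉ A) (hy : y ∉ A) (hxy : x ≠ y) {z w : V}
    (hzw : ¬(z = x ∧ w = y))
    (h : (A ++ x :: y :: B).idxOf z ≤ (A ++ x :: y :: B).idxOf w) :
    (A ++ y :: x :: B).idxOf z ≤ (A ++ y :: x :: B).idxOf w := by
  rcases idxOf_append_cons_cons_cases (B := B) hx hy hxy z with
      ⟨rfl, hz, hz'⟩ | ⟨rfl, hz, hz'⟩ | ⟨hz', hz⟩ <;>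
    rcases idxOf_append_cons_cons_cases (B := B) hx hy hxy w with
      ⟨rfl, hw, hw'⟩ | ⟨rfl, hw, hw'⟩ | ⟨hw', hw⟩ <;>
    first | omega | simp at hzw

/-- The swap breaks only the comparison `x ≤ y`, which a path ending at `x` needs only if it
passes through `y`; its segment from `y` to `x` then avoids `A`. -/
lemma wsub_subset_wsub_swap {G : SimpleGraph V} {r : ℕ} (hL : (A ++ x :: y :: B).Nodup)
    (hblock : ∀ p : G.Walk y x, p.IsPath → p.length ≤ r → ∃ w ∈ p.support, w ∈ A) (u : V) :
    Wsub G r (A ++ x :: y :: B) u ⊆ Wsub G r (A ++ y :: x :: B) u := by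
  have hperm : (A ++ x :: y :: B).Perm (A ++ y :: x :: B) := (List.Perm.swap y x B).append_left A
  obtain ⟨hxA, hyA, hxy⟩ := notMem_notMem_ne_of_nodup hL
  rintro z (rfl | ⟨hz, p, hp, hpr, hpz⟩)
  · exact Or.inl rfl
  refine Or.inr ⟨hperm.mem_iff.1 hz, p, hp, hpr, fun w hw hwL => ?_⟩
  have hzw : ¬(z = x ∧ w = y) := by
    rintro ⟨rfl, rfl⟩
    obtain ⟨a, ha, haA⟩ := hblock (p.dropUntil w hw) (hp.dropUntil hw)
      ((p.length_dropUntil_le_length hw).trans hpr)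
    have hza := hpz a (p.support_dropUntil_subset_support hw ha) (List.mem_append_left _ haA)
    have hlt := List.idxOf_lt_length_of_mem haA
    rw [List.idxOf_append_of_mem haA, List.idxOf_append_of_notMem hxA,
      List.idxOf_cons_self] at hza
    omega
  exact idxOf_le_idxOf_swap hxA hyA hxy hzw (hpz w hw (hperm.mem_iff.2 hwL))

/-- A path avoiding `A` would make `y` weakly reachable from `x` after the swap, but never
before it, where `x` itself precedes `y`. -/
lemma exists_mem_support_of_wsub_eq {G : SimpleGraph V} {r : ℕ} (hL : (A ++ x :: y :: B).Nodup)
    (H : Wsub G r (A ++ x :: y :: B) x = Wsub G r (A ++ y :: x :: B) x)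
    (p : G.Walk x y) (hp : p.IsPath) (hpr : p.length ≤ r) : ∃ w ∈ p.support, w ∈ A := by
  obtain ⟨hxA, hyA, hxy⟩ := notMem_notMem_ne_of_nodup hL
  by_contra! hpA
  have hy : y ∈ Wsub G r (A ++ y :: x :: B) x := by
    refine Or.inr ⟨by simp, p, hp, hpr, fun w hw _ => ?_⟩
    rw [List.idxOf_append_of_notMem hyA, List.idxOf_cons_self,
      List.idxOf_append_of_notMem (hpA w hw)]
    omega
  rw [← H] at hy
  rcases hy with hyx | ⟨-, q, -, -, hqy⟩
  · exact hxy hyx.symm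
  · have := hqy x q.start_mem_support (by simp)
    rw [List.idxOf_append_of_notMem hyA, List.idxOf_append_of_notMem hxA,
      List.idxOf_cons_ne _ hxy, List.idxOf_cons_self, List.idxOf_cons_self] at this
    omega

lemma wsub_swap_eq_of_wsub_eq {G : SimpleGraph V} {r : ℕ} (hL : (A ++ x :: y :: B).Nodup)
    (H : Wsub G r (A ++ x :: y :: B) x = Wsub G r (A ++ y :: x :: B) x) (u : V) :
    Wsub G r (A ++ x :: y :: B) u = Wsub G r (A ++ y :: x :: B) u := by
  have hL' : (A ++ y :: x :: B).Nodup := ((List.Perm.swap y x B).append_left A).nodup_iff.1 hL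
  have hblock := exists_mem_support_of_wsub_eq hL H
  refine (wsub_subset_wsub_swap hL (fun p hp hpr => ?_) u).antisymm
    (wsub_subset_wsub_swap hL' hblock u)
  simpa using hblock p.reverse hp.reverse (by simpa using hpr)

end Swap

theorem stmt4 (G : SimpleGraph V) (r : ℕ) (LS : List V) (hLS : LS.Nodup)
    (v : V) (hv : v ∉ LS) (s : V) (hs : s ∈ LS) :
    s ∉ bp G r LS v ↔
      ∀ u, Wsub G r (placeBefore LS s v) u = Wsub G r (placeAfter LS s v) u := by
  obtain ⟨A, B, rfl⟩ := List.append_of_mem hs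
  have hsA : s ∉ A := fun h => List.disjoint_of_nodup_append hLS h (by simp)
  have hL : (A ++ v :: s :: B).Nodup := List.perm_middle.nodup_iff.2 (List.nodup_cons.2 ⟨hv, hLS⟩)
  simp only [bp, Set.mem_ofPred_eq, placeBefore_append_cons_s4 hsA, placeAfter_append_cons_s4 hsA,
    not_and, not_not]
  exact ⟨fun H => wsub_swap_eq_of_wsub_eq hL (H hs), fun H _ => H v⟩
end

section
/- Let G be a graph, r ∈ ℕ, L_S a subordering of S ⊆ V(G) with free vertices T = V(G)\S, and let L' be a full right extension of L_S. For u ∈ T, let X_{L'}(u) = { v ∈ T : v ≺_{L'} u }. If Wreach_r(G, L', u) ∩ X_{L'}(u) = ∅, then every path of length at most r between u and a vertex of X_{L'}(u) contains a vertex of S. -/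
open SimpleGraph

variable {V : Type*} [DecidableEq V]

lemma SimpleGraph.Walk.IsPath.mem_Wfull_of_forall_idxOf_le {G : SimpleGraph V} {r : ℕ}
    {L : List V} {v x w : V} {p : G.Walk v x} (hp : p.IsPath) (hlen : p.length ≤ r)
    (hw : w ∈ p.support) (hmin : ∀ y ∈ p.support, L.idxOf w ≤ L.idxOf y) :
    w ∈ Wfull G r L v :=
  ⟨p.takeUntil w hw, hp.takeUntil hw, (p.length_takeUntil_le_length hw).trans hlen,
    fun y hy => hmin y (p.support_takeUntil_subset_support hw hy)⟩

lemma SimpleGraph.Walk.exists_mem_support_forall_idxOf_le {G : SimpleGraph V} {v x : V}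
    (p : G.Walk v x) (L : List V) :
    ∃ w ∈ p.support, ∀ y ∈ p.support, L.idxOf w ≤ L.idxOf y := by
  obtain ⟨w, hw, hmin⟩ :=
    p.support.toFinset.exists_min_image L.idxOf ⟨v, by simp⟩
  exact ⟨w, by simpa using hw, fun y hy => hmin y (by simpa using hy)⟩

theorem stmt5_general (G : SimpleGraph V) (r : ℕ) (LS L' : List V)
    (u : V)
    (hX : Wfull G r L' u ∩ {x | x ∉ LS ∧ L'.idxOf x < L'.idxOf u} = ∅) :
    ∀ x, x ∉ LS → L'.idxOf x < L'.idxOf u →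
      ∀ p : G.Walk u x, p.IsPath → p.length ≤ r → ∃ w ∈ p.support, w ∈ LS := by
  intro x _ hxu p hp hlen
  by_contra! hfree
  obtain ⟨w, hw, hmin⟩ := p.exists_mem_support_forall_idxOf_le L'
  have hwX : w ∈ Wfull G r L' u ∩ {x | x ∉ LS ∧ L'.idxOf x < L'.idxOf u} :=
    ⟨hp.mem_Wfull_of_forall_idxOf_le hlen hw hmin,
      hfree w hw, (hmin x p.end_mem_support).trans_lt hxu⟩
  rw [hX] at hwX
  exact hwX

theorem stmt5 (G : SimpleGraph V) (r : ℕ) (LS L' : List V)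
    (hLS : LS.Nodup) (hL' : L'.Nodup) (hfull : ∀ x, x ∈ L')
    (hext : ∃ t : List V, L' = LS ++ t)
    (u : V) (hu : u ∉ LS)
    (hX : Wfull G r L' u ∩ {x | x ∉ LS ∧ L'.idxOf x < L'.idxOf u} = ∅) :
    ∀ x, x ∉ LS → L'.idxOf x < L'.idxOf u →
      ∀ p : G.Walk u x, p.IsPath → p.length ≤ r → ∃ w ∈ p.support, w ∈ LS :=
  stmt5_general G r LS L' u hX
end

section
/- Let G be a graph and r ∈ ℕ. Let L_S be a subordering of S ⊆ V(G) with free vertex set T = V(G)\S, and let L_{S'} be a left extension of L_S, i.e., S ⊆ S' ⊆ V(G), L_{S'} restricted to S equals L_S, and every vertex of S'\S precedes every vertex of S in L_{S'}. Then for all v ∈ S, PotSreach_r(G, L_S, v) ⊆ PotSreach_r(G, L_{S'}, v). -/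
open SimpleGraph

variable {V : Type*} [DecidableEq V]

/-- `u` is potentially strongly `r`-reachable from `v` w.r.t. the subordering `L`:
either `u ∈ Wreach_r(G[S], L, v)` (paths staying inside the ordered set `S`), or there is
a path of length at most `r` from `v` to `u` whose only free vertex is `u` itself. -/
def PotSreach (G : SimpleGraph V) (r : ℕ) (L : List V) (v : V) : Set V :=
  {u | (u ∈ L ∧ ∃ p : G.Walk v u, p.IsPath ∧ p.length ≤ r ∧
        (∀ w ∈ p.support, w ∈ L) ∧ ∀ w ∈ p.support, L.idxOf u ≤ L.idxOf w) ∨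
       (u ∉ L ∧ ∃ p : G.Walk v u, p.IsPath ∧ p.length ≤ r ∧ ∀ w ∈ p.support, w ≠ u → w ∈ L)}
/-
Prepending the new vertices `t` shifts the positions of the old ones uniformly, so every
witness path inside `S` keeps its leftmost vertex. A free target `u` either stays free, and the
same path witnesses it, or it is now ordered in `t` and hence precedes all of `S`, so the path,
whose other vertices lie in `S`, witnesses weak reachability inside `S'`.
-/

namespace List

variable {α : Type*} [DecidableEq α]

theorem idxOf_append_le_idxOf_append_iff {t l : List α} {a b : α} (ha : a ∉ t) (hb : b ∉ t) :
    (t ++ l).idxOf a ≤ (t ++ l).idxOf b ↔ l.idxOf a ≤ l.idxOf b := by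
  rw [idxOf_append_of_notMem ha, idxOf_append_of_notMem hb]
  omega

theorem idxOf_append_lt_idxOf_append {t l : List α} {a b : α} (ha : a ∈ t) (hb : b ∉ t) :
    (t ++ l).idxOf a < (t ++ l).idxOf b := by
  rw [idxOf_append_of_mem ha, idxOf_append_of_notMem hb]
  exact (idxOf_lt_length_iff.mpr ha).trans_le (Nat.le_add_right _ _)

end List

section PotSreach

variable (G : SimpleGraph V) (r : ℕ) {t l : List V} {v u : V} (p : G.Walk v u)

theorem mem_potSreach_append_of_inner (hdisj : t.Disjoint l) (hu : u ∈ l) (hp : p.IsPath)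
    (hlen : p.length ≤ r) (hsupp : ∀ w ∈ p.support, w ∈ l)
    (hord : ∀ w ∈ p.support, l.idxOf u ≤ l.idxOf w) :
    u ∈ PotSreach G r (t ++ l) v := by
  refine Or.inl ⟨List.mem_append_right _ hu, p, hp, hlen,
    fun w hw => List.mem_append_right _ (hsupp w hw), fun w hw => ?_⟩
  rw [List.idxOf_append_le_idxOf_append_iff (hdisj.symm hu) (hdisj.symm (hsupp w hw))]
  exact hord w hw

theorem mem_potSreach_append_of_mem_left (hdisj : t.Disjoint l) (hu : u ∈ t) (hp : p.IsPath)
    (hlen : p.length ≤ r) (hsupp : ∀ w ∈ p.support, w ≠ u → w ∈ l) :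
    u ∈ PotSreach G r (t ++ l) v := by
  refine Or.inl ⟨List.mem_append_left _ hu, p, hp, hlen, fun w hw => ?_, fun w hw => ?_⟩ <;>
    obtain rfl | hwu := eq_or_ne w u
  · exact List.mem_append_left _ hu
  · exact List.mem_append_right _ (hsupp w hw hwu)
  · exact le_rfl
  · exact (List.idxOf_append_lt_idxOf_append hu (hdisj.symm (hsupp w hw hwu))).le

theorem mem_potSreach_append_of_free (hut : u ∉ t) (hul : u ∉ l) (hp : p.IsPath)
    (hlen : p.length ≤ r) (hsupp : ∀ w ∈ p.support, w ≠ u → w ∈ l) :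
    u ∈ PotSreach G r (t ++ l) v :=
  Or.inr ⟨by simp [hut, hul], p, hp, hlen,
    fun w hw hwu => List.mem_append_right _ (hsupp w hw hwu)⟩

end PotSreach

theorem stmt7_general (G : SimpleGraph V) (r : ℕ) (LS LS' : List V)
    (hLS' : LS'.Nodup)
    (hext : ∃ t : List V, LS' = t ++ LS) :
    ∀ v ∈ LS, PotSreach G r LS v ⊆ PotSreach G r LS' v := by
  obtain ⟨t, rfl⟩ := hext
  have hdisj := List.disjoint_of_nodup_append hLS'
  rintro v - u (⟨hu, p, hp, hlen, hsupp, hord⟩ | ⟨hul, p, hp, hlen, hsupp⟩)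
  · exact mem_potSreach_append_of_inner G r p hdisj hu hp hlen hsupp hord
  · by_cases hut : u ∈ t
    · exact mem_potSreach_append_of_mem_left G r p hdisj hut hp hlen hsupp
    · exact mem_potSreach_append_of_free G r p hut hul hp hlen hsupp

theorem stmt7 (G : SimpleGraph V) (r : ℕ) (LS LS' : List V)
    (hLS : LS.Nodup) (hLS' : LS'.Nodup)
    (hext : ∃ t : List V, LS' = t ++ LS) :
    ∀ v ∈ LS, PotSreach G r LS v ⊆ PotSreach G r LS' v :=
  stmt7_general G r LS LS' hLS' hext
end
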